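/- Suppose two defenders on the unit circle with speeds v1 ≥ v2 and v1 + 3·v2 = 1 are at distance s(t) ≥ 2·v2. Then for any attack location x on the circle, the defenders can move (each at most their speed) so that some defender reaches x and the new distance s(t+1) between them is still at least 2·v2. -/

import Mathlib

/-!
If defender 2 can reach `x`, it goes there; by the triangle inequality defender 1 is then at
least `v₂` from `x`, and walking `v₂` further away from `x` brings it to distance at
least `min (2 v₂) (1/2) = 2 v₂`. Otherwise defender 1 can reach `x`: the three
pairwise arc distances of points on a circle of circumference 1 sum to at most 1, so
`d(x₁, x) ≤ 1 - 2 v₂ - v₂ = v₁`; defender 2, more than `v₂` from `x`, then walks away from `x`.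
-/

/-- Arc-length distance on the circle of circumference 1, with points
represented by arbitrary reals taken modulo 1. -/
noncomputable def circDist (a b : ℝ) : ℝ :=
  min (Int.fract (a - b)) (1 - Int.fract (a - b))

lemma circDist_eq_abs_sub_round (a b : ℝ) : circDist a b = |a - b - round (a - b)| :=
  (abs_sub_round_eq_min _).symm

lemma circDist_eq_dist (a b : ℝ) :
    circDist a b = dist (a : UnitAddCircle) (b : UnitAddCircle) := by
  rw [circDist_eq_abs_sub_round, dist_eq_norm, ← AddCircle.coe_sub, UnitAddCircle.norm_eq]

lemma circDist_self (a : ℝ) : circDist a a = 0 := by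
  simp [circDist_eq_dist]

lemma circDist_comm (a b : ℝ) : circDist a b = circDist b a := by
  simp only [circDist_eq_dist, dist_comm]

lemma circDist_triangle (a b c : ℝ) : circDist a c ≤ circDist a b + circDist b c := by
  simp only [circDist_eq_dist, dist_triangle]

lemma circDist_le_abs_sub (a b : ℝ) : circDist a b ≤ |a - b| := by
  simpa [circDist_eq_abs_sub_round] using round_le (a - b) 0

lemma circDist_add_fract_sub (p x y : ℝ) : circDist (x + Int.fract (p - x)) y = circDist p y := by
  have h : x + Int.fract (p - x) - y = p - y - ⌊p - x⌋ := by rw [Int.fract]; ring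
  simp only [circDist, h, Int.fract_sub_intCast]

lemma circDist_add_left (x g : ℝ) (hg₀ : 0 ≤ g) (hg₁ : g < 1) :
    circDist (x + g) x = min g (1 - g) := by
  simp only [circDist, add_sub_cancel_left, Int.fract_eq_self.mpr ⟨hg₀, hg₁⟩]

lemma circDist_add_circDist_add_circDist_le_one (a b c : ℝ) :
    circDist a b + circDist b c + circDist c a ≤ 1 := by
  set α := Int.fract (a - c)
  set β := Int.fract (b - c)
  have hab : circDist a b ≤ |α - β| := by
    rw [← circDist_add_fract_sub a c, circDist_comm, ← circDist_add_fract_sub b c,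
      circDist_comm]
    simpa using circDist_le_abs_sub (c + α) (c + β)
  have hbc : circDist b c = min β (1 - β) := by
    rw [← circDist_add_fract_sub b c,
      circDist_add_left _ _ (Int.fract_nonneg _) (Int.fract_lt_one _)]
  have hca : circDist c a = min α (1 - α) := by
    rw [circDist_comm, ← circDist_add_fract_sub a c,
      circDist_add_left _ _ (Int.fract_nonneg _) (Int.fract_lt_one _)]
  rw [hbc, hca]
  rcases abs_cases (α - β) with ⟨h, -⟩ | ⟨h, -⟩ <;> rw [h] at hab
  · linarith [min_le_left β (1 - β), min_le_right α (1 - α)]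
  · linarith [min_le_right β (1 - β), min_le_left α (1 - α)]

-- Walk from `p` straight away from `x`, stopping at the antipode of `x`.
lemma exists_circDist_le_and_circDist_eq_min (p x : ℝ) {r : ℝ} (hr : 0 ≤ r) :
    ∃ y, circDist p y ≤ r ∧ circDist y x = min (circDist p x + r) (1 / 2) := by
  set f := Int.fract (p - x)
  have hf₀ : 0 ≤ f := Int.fract_nonneg _
  have hf₁ : f < 1 := Int.fract_lt_one _
  have hpx : circDist p x = min f (1 - f) := by
    rw [← circDist_add_fract_sub p x, circDist_add_left _ _ hf₀ hf₁]
  have hpy (g : ℝ) : circDist p (x + g) ≤ |f - g| := by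
    rw [← circDist_add_fract_sub p x]
    simpa using circDist_le_abs_sub (x + f) (x + g)
  rcases le_total f (1 / 2) with hf | hf
  · set g := min (f + r) (1 / 2)
    have hfg : f ≤ g := le_min (by linarith) hf
    have hg : g ≤ 1 / 2 := min_le_right _ _
    refine ⟨x + g, (hpy g).trans ?_, ?_⟩
    · rw [abs_of_nonpos (by linarith)]
      linarith [min_le_left (f + r) (1 / 2)]
    · rw [circDist_add_left x g (by linarith) (by linarith), hpx,
        min_eq_left (by linarith : g ≤ 1 - g), min_eq_left (by linarith : f ≤ 1 - f)]
  · set g := max (f - r) (1 / 2)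
    have hgf : g ≤ f := max_le (by linarith) hf
    have hg : 1 / 2 ≤ g := le_max_right _ _
    refine ⟨x + g, (hpy g).trans ?_, ?_⟩
    · rw [abs_of_nonneg (by linarith)]
      linarith [le_max_left (f - r) (1 / 2)]
    · rw [circDist_add_left x g (by linarith) (by linarith), hpx,
        min_eq_right (by linarith : 1 - g ≤ g), min_eq_right (by linarith : 1 - f ≤ f),
        ← min_sub_sub_left]
      norm_num [sub_add]

lemma exists_circDist_le_and_two_mul_le_circDist {p x v : ℝ} (hv₀ : 0 ≤ v) (hv : 4 * v ≤ 1)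
    (hpx : v ≤ circDist p x) : ∃ y, circDist p y ≤ v ∧ 2 * v ≤ circDist y x := by
  obtain ⟨y, hpy, hyx⟩ := exists_circDist_le_and_circDist_eq_min p x hv₀
  exact ⟨y, hpy, hyx ▸ le_min (by linarith) (by linarith)⟩

/-- Two defenders with speeds `v₁ ≥ v₂ > 0`, `v₁ + 3 v₂ = 1`, at distance at
least `2 v₂` apart: for any attack location `x`, the defenders can move (each
at most their own speed) so that one of them reaches `x` and the new distance
between them is still at least `2 v₂`. -/
theorem maintain_coverage (v₁ v₂ : ℝ) (h21 : v₂ ≤ v₁) (h2 : 0 < v₂)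
    (hsum : v₁ + 3 * v₂ = 1) (x₁ x₂ : ℝ) (hs : 2 * v₂ ≤ circDist x₁ x₂)
    (x : ℝ) :
    ∃ y₁ y₂ : ℝ, circDist x₁ y₁ ≤ v₁ ∧ circDist x₂ y₂ ≤ v₂ ∧
      (circDist y₁ x = 0 ∨ circDist y₂ x = 0) ∧ 2 * v₂ ≤ circDist y₁ y₂ := by
  have hv₂ : 4 * v₂ ≤ 1 := by linarith
  by_cases h₂x : circDist x₂ x ≤ v₂
  · have h₁x : v₂ ≤ circDist x₁ x := by linarith [circDist_triangle x₁ x x₂, circDist_comm x x₂]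
    obtain ⟨y₁, h₁y, hyx⟩ := exists_circDist_le_and_two_mul_le_circDist h2.le hv₂ h₁x
    exact ⟨y₁, x, h₁y.trans h21, h₂x, .inr (circDist_self x), hyx⟩
  · have h₁x : circDist x₁ x ≤ v₁ := by
      linarith [circDist_add_circDist_add_circDist_le_one x₁ x₂ x, circDist_comm x x₁]
    obtain ⟨y₂, h₂y, hyx⟩ :=
      exists_circDist_le_and_two_mul_le_circDist h2.le hv₂ (not_le.mp h₂x).le
    exact ⟨x, y₂, h₁x, h₂y, .inl (circDist_self x), circDist_comm y₂ x ▸ hyx⟩
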